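/- Let n < m ≤ N, Φ ∈ ℝ^{N×m} with ΦᵀΦ = I_m, S ∈ ℝ^{N×n} with SᵀS = I_n, M := SᵀΦ with MMᵀ invertible, M⁺ := Mᵀ(MMᵀ)⁻¹, D := ΦM⁺Sᵀ, and Z ∈ ℝ^{m×(m−n)} with ZᵀZ = I_{m−n} and MZ = 0. Fix u ∈ ℝ^N, let û := ΦΦᵀu and ẑ := ZZᵀΦᵀu. Then for every z ∈ ℝ^m with Mz = 0, the S-DEIM reconstruction ũ(z) := ΦM⁺Sᵀu + Φz satisfies the exact error decomposition ‖u − ũ(z)‖² = ‖u − û‖² + ‖D(u − û)‖² + ‖ẑ − z‖². -/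

import Mathlib

open Matrix

/-- A matrix acting on Euclidean space. -/
noncomputable def aV {a b : ℕ} (A : Matrix (Fin a) (Fin b) ℝ)
    (x : EuclideanSpace ℝ (Fin b)) : EuclideanSpace ℝ (Fin a) :=
  Matrix.toEuclideanLin A x

lemma aV_apply {a b : ℕ} (A : Matrix (Fin a) (Fin b) ℝ) (x : EuclideanSpace ℝ (Fin b)) (i : Fin a) :
    aV A x i = ∑ j, A i j * x j := by
  unfold aV; rw [Matrix.toEuclideanLin_apply]; rfl

lemma aV_mul {a b c : ℕ} (A : Matrix (Fin a) (Fin b) ℝ) (B : Matrix (Fin b) (Fin c) ℝ)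
    (x : EuclideanSpace ℝ (Fin c)) : aV (A * B) x = aV A (aV B x) := by
  ext i
  simp only [aV_apply, Matrix.mul_apply, Finset.sum_mul, Finset.mul_sum]
  rw [Finset.sum_comm]
  congr 1; ext j; congr 1; ext k; ring

lemma aV_one {a : ℕ} (x : EuclideanSpace ℝ (Fin a)) : aV 1 x = x := by
  ext i; simp [aV_apply, Matrix.one_apply]

lemma aV_zero {a b : ℕ} (x : EuclideanSpace ℝ (Fin b)) :
    aV (0 : Matrix (Fin a) (Fin b) ℝ) x = 0 := by
  ext i; simp [aV_apply]

lemma aV_add_mat {a b : ℕ} (A B : Matrix (Fin a) (Fin b) ℝ) (x : EuclideanSpace ℝ (Fin b)) :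
    aV (A + B) x = aV A x + aV B x := by
  ext i; simp [aV_apply, Matrix.add_apply, Finset.sum_add_distrib, add_mul]

lemma aV_sub {a b : ℕ} (A : Matrix (Fin a) (Fin b) ℝ) (x y : EuclideanSpace ℝ (Fin b)) :
    aV A (x - y) = aV A x - aV A y := map_sub (Matrix.toEuclideanLin A) x y

lemma aV_neg {a b : ℕ} (A : Matrix (Fin a) (Fin b) ℝ) (x : EuclideanSpace ℝ (Fin b)) :
    aV A (-x) = -aV A x := map_neg (Matrix.toEuclideanLin A) x

lemma aV_map_zero {a b : ℕ} (A : Matrix (Fin a) (Fin b) ℝ) :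
    aV A (0 : EuclideanSpace ℝ (Fin b)) = 0 := map_zero (Matrix.toEuclideanLin A)

lemma aV_inner {a b : ℕ} (A : Matrix (Fin a) (Fin b) ℝ) (x : EuclideanSpace ℝ (Fin b))
    (y : EuclideanSpace ℝ (Fin a)) :
    (inner ℝ (aV A x) y : ℝ) = inner ℝ x (aV Aᵀ y) := by
  simp only [PiLp.inner_apply, RCLike.inner_apply, starRingEnd_apply, star_trivial, aV_apply,
    Finset.sum_mul, Finset.mul_sum]
  rw [Finset.sum_comm]
  congr 1; ext j; congr 1; ext i; simp [Matrix.transpose_apply]; ring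

lemma key_proj {m n : ℕ} (hnm : n < m)
    (M : Matrix (Fin n) (Fin m) ℝ) (hMM : IsUnit (M * Mᵀ))
    (Mplus : Matrix (Fin m) (Fin n) ℝ) (hMp : Mplus = Mᵀ * (M * Mᵀ)⁻¹)
    (Z : Matrix (Fin m) (Fin (m - n)) ℝ) (hZ : Zᵀ * Z = 1) (hMZ : M * Z = 0) :
    Z * Zᵀ + Mplus * M = 1 := by
  have hdet : IsUnit (M * Mᵀ).det := (Matrix.isUnit_iff_isUnit_det _).mp hMM
  have hMMp : M * Mplus = 1 := by
    rw [hMp, ← Matrix.mul_assoc, Matrix.mul_nonsing_inv _ hdet]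
  have hZM : Zᵀ * Mᵀ = 0 := by rw [← Matrix.transpose_mul, hMZ, Matrix.transpose_zero]
  have hZMp : Zᵀ * Mplus = 0 := by
    rw [hMp, ← Matrix.mul_assoc, hZM, Matrix.zero_mul]
  set P := Z * Zᵀ + Mplus * M with hP
  have hPT : Pᵀ = P := by
    have hMpT : Mplusᵀ = (M * Mᵀ)⁻¹ * M := by
      rw [hMp, Matrix.transpose_mul, Matrix.transpose_nonsing_inv, Matrix.transpose_mul,
        Matrix.transpose_transpose]
    have h1 : (Mplus * M)ᵀ = Mplus * M := by
      rw [Matrix.transpose_mul, hMpT, hMp]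
      rw [Matrix.mul_assoc]
    rw [hP, Matrix.transpose_add, Matrix.transpose_mul, Matrix.transpose_transpose, h1]
  have hPP : P * P = P := by
    rw [hP]
    rw [Matrix.add_mul, Matrix.mul_add, Matrix.mul_add]
    have e1 : Z * Zᵀ * (Z * Zᵀ) = Z * Zᵀ := by
      rw [Matrix.mul_assoc, ← Matrix.mul_assoc Zᵀ, hZ, Matrix.one_mul]
    have e2 : Z * Zᵀ * (Mplus * M) = 0 := by
      rw [Matrix.mul_assoc, ← Matrix.mul_assoc Zᵀ, hZMp, Matrix.zero_mul, Matrix.mul_zero]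
    have e3 : Mplus * M * (Z * Zᵀ) = 0 := by
      rw [Matrix.mul_assoc, ← Matrix.mul_assoc M, hMZ, Matrix.zero_mul, Matrix.mul_zero]
    have e4 : Mplus * M * (Mplus * M) = Mplus * M := by
      rw [Matrix.mul_assoc, ← Matrix.mul_assoc M, hMMp, Matrix.one_mul]
    rw [e1, e2, e3, e4, add_zero, zero_add]
  set Q := (1 : Matrix (Fin m) (Fin m) ℝ) - P with hQ
  have hQT : Qᵀ = Q := by rw [hQ, Matrix.transpose_sub, Matrix.transpose_one, hPT]
  have hQQ : Q * Q = Q := by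
    rw [hQ, Matrix.sub_mul, Matrix.mul_sub, Matrix.mul_sub, Matrix.one_mul, Matrix.mul_one,
      Matrix.one_mul, hPP]
    abel
  have htrQ : Matrix.trace Q = 0 := by
    have t1 : Matrix.trace (Z * Zᵀ) = (m - n : ℕ) := by
      rw [Matrix.trace_mul_comm, hZ, Matrix.trace_one]
      simp
    have t2 : Matrix.trace (Mplus * M) = (n : ℕ) := by
      rw [Matrix.trace_mul_comm, hMMp, Matrix.trace_one]
      simp
    rw [hQ, Matrix.trace_sub, hP, Matrix.trace_add, t1, t2, Matrix.trace_one]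
    have : ((m - n : ℕ) : ℝ) = (m : ℝ) - n := by
      rw [Nat.cast_sub hnm.le]
    simp [this]
  have hQ0 : Q = 0 := by
    have hdiag : ∑ i, ∑ k, Q k i ^ 2 = 0 := by
      have : Matrix.trace (Qᵀ * Q) = 0 := by rw [hQT, hQQ, htrQ]
      rw [Matrix.trace] at this
      calc ∑ i, ∑ k, Q k i ^ 2 = ∑ i, (Qᵀ * Q) i i := by
            congr 1; ext i
            rw [Matrix.mul_apply]
            congr 1; ext k; rw [Matrix.transpose_apply]; ring
        _ = 0 := this
    ext k i
    have h1 : ∀ i ∈ Finset.univ, (0:ℝ) ≤ ∑ k, Q k i ^ 2 := fun i _ =>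
      Finset.sum_nonneg fun k _ => sq_nonneg _
    have h2 := (Finset.sum_eq_zero_iff_of_nonneg h1).mp hdiag i (Finset.mem_univ i)
    have h3 : ∀ k ∈ Finset.univ, (0:ℝ) ≤ Q k i ^ 2 := fun k _ => sq_nonneg _
    have h4 := (Finset.sum_eq_zero_iff_of_nonneg h3).mp h2 k (Finset.mem_univ k)
    simpa using pow_eq_zero_iff two_ne_zero |>.mp h4
  have := sub_eq_zero.mp hQ0
  rw [hP] at this
  exact this.symm

/-- Sparse DEIM error decomposition (Theorem 3.8): with `n < m ≤ N`, for any kernel vector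
`z ∈ ker M`, the S-DEIM reconstruction `ũ(z) = ΦM⁺Sᵀu + Φz` satisfies
`‖u − ũ(z)‖² = ‖u − û‖² + ‖D(u − û)‖² + ‖ẑ − z‖²`, where `û = ΦΦᵀu`, `D = ΦM⁺Sᵀ`, and
`ẑ = ZZᵀΦᵀu`. -/
theorem SDEIM_error_decomposition (N m n : ℕ) (hnm : n < m) (hmN : m ≤ N)
    (Φ : Matrix (Fin N) (Fin m) ℝ) (S : Matrix (Fin N) (Fin n) ℝ)
    (hΦ : Φᵀ * Φ = 1) (hS : Sᵀ * S = 1)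
    (M : Matrix (Fin n) (Fin m) ℝ) (hM : M = Sᵀ * Φ)
    (hMM : IsUnit (M * Mᵀ))
    (Mplus : Matrix (Fin m) (Fin n) ℝ) (hMp : Mplus = Mᵀ * (M * Mᵀ)⁻¹)
    (D : Matrix (Fin N) (Fin N) ℝ) (hD : D = Φ * Mplus * Sᵀ)
    (Z : Matrix (Fin m) (Fin (m - n)) ℝ) (hZ : Zᵀ * Z = 1) (hMZ : M * Z = 0)
    (u : EuclideanSpace ℝ (Fin N))
    (uhat : EuclideanSpace ℝ (Fin N)) (huhat : uhat = aV (Φ * Φᵀ) u)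
    (zhat : EuclideanSpace ℝ (Fin m)) (hzhat : zhat = aV (Z * Zᵀ * Φᵀ) u) :
    ∀ z : EuclideanSpace ℝ (Fin m), aV M z = 0 →
      ‖u - (aV (Φ * Mplus * Sᵀ) u + aV Φ z)‖ ^ 2 =
        ‖u - uhat‖ ^ 2 + ‖aV D (u - uhat)‖ ^ 2 + ‖zhat - z‖ ^ 2 := by
  intro z hz
  have hkey : Z * Zᵀ + Mplus * M = 1 := key_proj hnm M hMM Mplus hMp Z hZ hMZ
  have hdet : IsUnit (M * Mᵀ).det := (Matrix.isUnit_iff_isUnit_det _).mp hMM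
  have hMMp : M * Mplus = 1 := by
    rw [hMp, ← Matrix.mul_assoc, Matrix.mul_nonsing_inv _ hdet]
  have hZM : Zᵀ * Mᵀ = 0 := by rw [← Matrix.transpose_mul, hMZ, Matrix.transpose_zero]
  have hZZMp : Z * Zᵀ * Mplus = 0 := by
    rw [hMp, Matrix.mul_assoc, ← Matrix.mul_assoc Zᵀ, hZM, Matrix.zero_mul, Matrix.mul_zero]
  set e := u - uhat with he
  set w := aV Φᵀ u - aV Mplus (aV Sᵀ u) - z with hw
  -- Φᵀ e = 0
  have hΦe : aV Φᵀ e = 0 := by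
    rw [he, aV_sub, huhat, ← aV_mul, ← Matrix.mul_assoc, hΦ, Matrix.one_mul, sub_self]
  -- norm preservation by Φ
  have hΦnorm : ∀ x : EuclideanSpace ℝ (Fin m), ‖aV Φ x‖ ^ 2 = ‖x‖ ^ 2 := by
    intro x
    rw [← real_inner_self_eq_norm_sq, ← real_inner_self_eq_norm_sq, aV_inner, ← aV_mul, hΦ,
      aV_one]
  -- Step A: decomposition of the error vector
  have hA : u - (aV (Φ * Mplus * Sᵀ) u + aV Φ z) = e + aV Φ w := by
    have h1 : aV (Φ * Mplus * Sᵀ) u = aV Φ (aV Mplus (aV Sᵀ u)) := by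
      rw [aV_mul, aV_mul]
    have h2 : aV Φ w = uhat - aV Φ (aV Mplus (aV Sᵀ u)) - aV Φ z := by
      rw [hw, aV_sub, aV_sub, huhat, aV_mul]
    rw [h1, h2, he]
    abel
  -- Pythagoras 1
  have hP1 : ‖e + aV Φ w‖ ^ 2 = ‖e‖ ^ 2 + ‖w‖ ^ 2 := by
    have horth : (inner ℝ e (aV Φ w) : ℝ) = 0 := by
      rw [real_inner_comm, aV_inner, hΦe, inner_zero_right]
    rw [norm_add_sq_real, horth, hΦnorm]
    ring
  -- split w
  set p := aV (Mplus * M) w with hp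
  set q := aV (Z * Zᵀ) w with hq
  have hwpq : w = p + q := by
    have : aV (Z * Zᵀ + Mplus * M) w = w := by rw [hkey, aV_one]
    rw [aV_add_mat] at this
    rw [hp, hq, add_comm]
    exact this.symm
  -- orthogonality of p and q
  have horth2 : (inner ℝ p q : ℝ) = 0 := by
    have hmat : (Z * Zᵀ)ᵀ * (Mplus * M) = 0 := by
      rw [Matrix.transpose_mul, Matrix.transpose_transpose, ← Matrix.mul_assoc, hZZMp,
        Matrix.zero_mul]
    rw [real_inner_comm, hq, aV_inner, ← aV_mul, hmat, aV_zero, inner_zero_right]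
  -- Pythagoras 2
  have hP2 : ‖w‖ ^ 2 = ‖p‖ ^ 2 + ‖q‖ ^ 2 := by
    rw [hwpq, norm_add_sq_real, horth2]
    ring
  -- q = zhat - z
  have hqval : q = zhat - z := by
    have hZZz : aV (Z * Zᵀ) z = z := by
      have h1 : Z * Zᵀ = 1 - Mplus * M := by
        rw [← hkey]; abel
      have hsub : aV (1 - Mplus * M) z = aV 1 z - aV (Mplus * M) z := by
        have : (1 : Matrix (Fin m) (Fin m) ℝ) - Mplus * M + Mplus * M = 1 := by abel
        calc aV (1 - Mplus * M) z = aV (1 - Mplus * M + Mplus * M) z - aV (Mplus * M) z := by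
              rw [aV_add_mat]; abel
          _ = aV 1 z - aV (Mplus * M) z := by rw [this]
      rw [h1, hsub, aV_one, aV_mul, hz, aV_map_zero, sub_zero]
    rw [hq, hw, aV_sub, aV_sub, hZZz, ← aV_mul, ← aV_mul, hZZMp, aV_zero, hzhat]
    abel
  -- p in terms of e
  have hMw : aV M w = -aV Sᵀ e := by
    have h1 : aV M (aV Φᵀ u) = aV Sᵀ uhat := by
      rw [← aV_mul, hM, Matrix.mul_assoc, aV_mul, huhat]
    have h2 : aV M (aV Mplus (aV Sᵀ u)) = aV Sᵀ u := by
      rw [← aV_mul, hMMp, aV_one]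
    rw [hw, aV_sub, aV_sub, h1, h2, hz, sub_zero, he, aV_sub]
    abel
  have hpval : p = -aV Mplus (aV Sᵀ e) := by
    rw [hp, aV_mul, hMw, aV_neg]
  have hDval : ‖aV D e‖ ^ 2 = ‖p‖ ^ 2 := by
    rw [hD, aV_mul, aV_mul, hΦnorm, hpval, norm_neg]
  rw [hA, hP1, hP2, hDval, hqval]
  ring
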